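/- arXiv:math/0608715 — 2 statements merged into one kernel-verified Lean document; each statement's English description precedes it below -/
import Mathlib

section
/- Let r ≥ 1 be an integer. For every chain-type d = (d_1,…,d_m) of degree at most r there exists a GI-type (I,J) for rank r with Φ_r(I,J) = d; that is, the map Φ_r from GI-types for rank r to chain-types of degree at most r is surjective. -/
/-- Minimum of a finite set of naturals, with the convention that `min ∅ = r`. -/
def minD (r : ℕ) (S : Finset ℕ) : ℕ := if h : S.Nonempty then S.min' h else r

/-- `(I, J)` is a GI-type for rank `r`: both are subsets of `{0,…,r-1}` and
`min I + min J ≥ r` (with `min ∅ = r`). -/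
def IsGIType (r : ℕ) (I J : Finset ℕ) : Prop :=
  I ⊆ Finset.range r ∧ J ⊆ Finset.range r ∧ r ≤ minD r I + minD r J

/-- For `S = {i₁ < … < i_p}`, the list of successive differences
`(i₂ - i₁, …, i_p - i_{p-1}, r - i_p)` of the list `(i₁, …, i_p, r)`. -/
def diffs (r : ℕ) (S : Finset ℕ) : List ℕ :=
  List.zipWith (fun a b => b - a) (S.sort (· ≤ ·) ++ [r]) ((S.sort (· ≤ ·) ++ [r]).tail)

/-- The tuple `Φ_r(I,J) = (d₁,…,d_{p+q})` associated to a GI-type `(I,J)`: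
for `I = {i₁ < … < i_p}`, `J = {j₁ < … < j_q}`, it is given by
`d_m = i_{m+1} - i_m` for `1 ≤ m ≤ p` (with `i_{p+1} := r`) and
`d_m = j_{p+q-m+2} - j_{p+q-m+1}` for `p+1 ≤ m ≤ p+q` (with `j_{q+1} := r`). -/
def Phi (r : ℕ) (I J : Finset ℕ) : List ℕ := diffs r I ++ (diffs r J).reverse

/-!
Take `J = ∅`, so that `min J = r` and the GI-condition holds for any `I ⊆ {0,…,r-1}`, and let `I`
consist of the partial sums `s, s + d₁, …, s + d₁ + … + d_{m-1}` with `s = r - (d₁ + … + d_m)`.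
Appending `r = s + d₁ + … + d_m` to this strictly increasing list, the successive differences
are exactly `d₁, …, d_m`.
-/

namespace List

theorem le_of_mem_scanl_add {d : List ℕ} {s x : ℕ} (hx : x ∈ d.scanl (· + ·) s) : s ≤ x := by
  induction d generalizing s with
  | nil => simp_all
  | cons a t ih =>
    rcases mem_cons.mp (scanl_cons ▸ hx) with rfl | hx
    · rfl
    · exact (Nat.le_add_right s a).trans (ih hx)

theorem pairwise_lt_scanl_add {d : List ℕ} (hpos : ∀ x ∈ d, 0 < x) (s : ℕ) :
    (d.scanl (· + ·) s).Pairwise (· < ·) := by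
  induction d generalizing s with
  | nil => simp
  | cons a t ih =>
    rw [scanl_cons, pairwise_cons]
    refine ⟨fun x hx => ?_, ih (fun x hx => hpos x (mem_cons_of_mem a hx)) (s + a)⟩
    have := le_of_mem_scanl_add hx
    have := hpos a mem_cons_self
    omega

theorem zipWith_sub_scanl_add (d : List ℕ) (s : ℕ) :
    zipWith (fun a b => b - a) (d.scanl (· + ·) s) (d.scanl (· + ·) s).tail = d := by
  induction d generalizing s with
  | nil => simp
  | cons a t ih =>
    cases t with
    | nil => simp
    | cons b u => simpa using ih (s + a)

theorem dropLast_scanl_add_append (d : List ℕ) (s : ℕ) :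
    (d.scanl (· + ·) s).dropLast ++ [s + d.sum] = d.scanl (· + ·) s := by
  have hlast : (d.scanl (· + ·) s).getLast scanl_ne_nil = s + d.sum := by
    rw [getLast_scanl, foldl_eq_apply_foldr, sum_eq_foldr]
  rw [← hlast, dropLast_append_getLast]

theorem toFinset_subset_range_of_pairwise {r : ℕ} {L : List ℕ}
    (hL : (L ++ [r]).Pairwise (· < ·)) : L.toFinset ⊆ Finset.range r := fun x hx =>
  Finset.mem_range.mpr <|
    (pairwise_append.mp hL).2.2 x (mem_toFinset.mp hx) r (mem_singleton_self r)

end List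

theorem isGIType_empty_right {r : ℕ} {I : Finset ℕ} (hI : I ⊆ Finset.range r) :
    IsGIType r I ∅ :=
  ⟨hI, Finset.empty_subset _, by simp [minD]⟩

theorem diffs_empty (r : ℕ) : diffs r ∅ = [] := by
  simp [diffs]

theorem diffs_toFinset {r : ℕ} {L : List ℕ} (hL : (L ++ [r]).Pairwise (· < ·)) :
    diffs r L.toFinset = List.zipWith (fun a b => b - a) (L ++ [r]) (L ++ [r]).tail := by
  have hsorted : L.Pairwise (· < ·) := hL.sublist (List.sublist_append_left L [r])
  have hsort : L.toFinset.sort (· ≤ ·) = L :=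
    (List.toFinset_sort (· ≤ ·) hsorted.nodup).mpr (hsorted.imp le_of_lt)
  rw [diffs, hsort]

theorem phi_surjective_general (r : ℕ) (d : List ℕ)
    (hpos : ∀ x ∈ d, 1 ≤ x) (hdeg : d.sum ≤ r) :
    ∃ I J : Finset ℕ, IsGIType r I J ∧ Phi r I J = d := by
  set P := d.scanl (· + ·) (r - d.sum)
  have hP : P.dropLast ++ [r] = P := by
    simpa only [Nat.sub_add_cancel hdeg] using List.dropLast_scanl_add_append d (r - d.sum)
  have hsorted : (P.dropLast ++ [r]).Pairwise (· < ·) := by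
    rw [hP]; exact List.pairwise_lt_scanl_add hpos _
  refine ⟨P.dropLast.toFinset, ∅, isGIType_empty_right (List.toFinset_subset_range_of_pairwise hsorted), ?_⟩
  rw [Phi, diffs_empty, diffs_toFinset hsorted, hP, List.reverse_nil, List.append_nil]
  exact List.zipWith_sub_scanl_add d _

theorem phi_surjective (r : ℕ) (hr : 1 ≤ r) (d : List ℕ)
    (hpos : ∀ x ∈ d, 1 ≤ x) (hdeg : d.sum ≤ r) :
    ∃ I J : Finset ℕ, IsGIType r I J ∧ Phi r I J = d :=
  phi_surjective_general r d hpos hdeg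
end

section
/- Let r ≥ 1 be an integer and let (I,J) and (I',J') be GI-types for rank r with |I| = |I'|. If Φ_r(I,J) = Φ_r(I',J'), then I = I' and J = J'. In other words, a GI-type is uniquely determined by its associated chain-type together with the cardinality of its first member. -/
/-! The first `|I|` entries of `Φ_r(I, J)` are the successive differences of `(i₁, …, i_p, r)`,
the others those of `(j₁, …, j_q, r)` in reverse order. A non-decreasing list is recovered from
its successive differences and its last entry by reading it from the right, and here the last
entry is always `r`. -/

def succDiffs (l : List ℕ) : List ℕ := List.zipWith (fun a b => b - a) l l.tail

theorem eq_of_succDiffs_eq_of_getLast?_eq :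
    ∀ {l₁ l₂ : List ℕ}, l₁.IsChain (· ≤ ·) → l₂.IsChain (· ≤ ·) →
      l₁.getLast? = l₂.getLast? → succDiffs l₁ = succDiffs l₂ → l₁ = l₂
  | [], [], _, _, _, _ => rfl
  | [], _ :: _, _, _, hlast, _ | _ :: _, [], _, _, hlast, _ => by simp [List.getLast?_cons] at hlast
  | [_], [_], _, _, hlast, _ => by simpa using hlast
  | [_], _ :: _ :: _, _, _, _, hd | _ :: _ :: _, [_], _, _, _, hd => by simp [succDiffs] at hd
  | a :: b :: t, a' :: b' :: t', h₁, h₂, hlast, hd => by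
      rw [List.isChain_cons_cons] at h₁ h₂
      simp only [succDiffs, List.tail_cons, List.zipWith_cons_cons, List.cons.injEq] at hd
      have htail : b :: t = b' :: t' :=
        eq_of_succDiffs_eq_of_getLast?_eq h₁.2 h₂.2 (by simpa using hlast) hd.2
      obtain ⟨rfl, rfl⟩ := List.cons.inj htail
      have ha : a = a' := by omega
      rw [ha]

theorem isChain_sort_append {r : ℕ} {S : Finset ℕ} (hS : ∀ x ∈ S, x ≤ r) :
    (S.sort (· ≤ ·) ++ [r]).IsChain (· ≤ ·) :=
  List.Pairwise.isChain <| List.pairwise_append.mpr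
    ⟨S.pairwise_sort _, List.pairwise_singleton _ _,
      fun x hx _ hy => (List.mem_singleton.mp hy) ▸ hS x ((S.mem_sort _).mp hx)⟩

theorem eq_of_diffs_eq {r : ℕ} {S S' : Finset ℕ} (hS : ∀ x ∈ S, x ≤ r)
    (hS' : ∀ x ∈ S', x ≤ r) (h : diffs r S = diffs r S') : S = S' := by
  have hsort : S.sort (· ≤ ·) ++ [r] = S'.sort (· ≤ ·) ++ [r] :=
    eq_of_succDiffs_eq_of_getLast?_eq (isChain_sort_append hS) (isChain_sort_append hS')
      (by simp) h
  ext x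
  rw [← S.mem_sort (· ≤ ·), List.append_cancel_right hsort, Finset.mem_sort]

theorem length_diffs (r : ℕ) (S : Finset ℕ) : (diffs r S).length = S.card := by
  simp [diffs, Finset.length_sort]

theorem IsGIType.le_of_mem_left {r : ℕ} {I J : Finset ℕ} (h : IsGIType r I J) :
    ∀ x ∈ I, x ≤ r :=
  fun _ hx => (Finset.mem_range.mp (h.1 hx)).le

theorem IsGIType.le_of_mem_right {r : ℕ} {I J : Finset ℕ} (h : IsGIType r I J) :
    ∀ x ∈ J, x ≤ r :=
  fun _ hx => (Finset.mem_range.mp (h.2.1 hx)).le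

theorem phi_injective_on_card_general (r : ℕ)
    (I J I' J' : Finset ℕ)
    (hIJ : IsGIType r I J) (hIJ' : IsGIType r I' J')
    (hcard : I.card = I'.card)
    (hphi : Phi r I J = Phi r I' J') :
    I = I' ∧ J = J' := by
  obtain ⟨hI, hJ⟩ := List.append_inj hphi (by rw [length_diffs, length_diffs, hcard])
  exact ⟨eq_of_diffs_eq (IsGIType.le_of_mem_left hIJ) (IsGIType.le_of_mem_left hIJ') hI,
    eq_of_diffs_eq (IsGIType.le_of_mem_right hIJ)
      (IsGIType.le_of_mem_right hIJ')
      (List.reverse_injective hJ)⟩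

theorem phi_injective_on_card (r : ℕ) (hr : 1 ≤ r)
    (I J I' J' : Finset ℕ)
    (hIJ : IsGIType r I J) (hIJ' : IsGIType r I' J')
    (hcard : I.card = I'.card)
    (hphi : Phi r I J = Phi r I' J') :
    I = I' ∧ J = J' :=
  phi_injective_on_card_general r I J I' J' hIJ hIJ' hcard hphi
end
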